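/- Suppose the coefficients a_{jk} satisfy |∂_x^α(a_{jk}(x) − δ_{jk})| ≤ C_α⟨x⟩^{−μ−|α|} with μ > 1, k(x,ξ) = (1/2)Σ a_{jk}(x)ξ_jξ_k, p_0(ξ) = |ξ|^2/2, and (x_0,ξ_0) ∈ T*ℝ^n ∖ 0 is forward nontrapping (|y(t)| → ∞ as t → +∞ along exp(tH_k)). Then the limit w_+(x_0,ξ_0) = lim_{t→+∞} exp(−tH_{p_0}) ∘ exp(tH_k)(x_0,ξ_0) exists; moreover ξ_+ = lim_{t→∞} η(t) and z_+ = lim_{t→∞}(y(t) − tη(t)) exist, where (y(t),η(t)) = exp(tH_k)(x_0,ξ_0). -/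

import Mathlib

open Filter

/-- Hamilton vector field of p on T*ℝⁿ = ℝⁿ × ℝⁿ. -/
noncomputable def hamVF (n : ℕ) (p : (Fin n → ℝ) × (Fin n → ℝ) → ℝ)
    (z : (Fin n → ℝ) × (Fin n → ℝ)) : (Fin n → ℝ) × (Fin n → ℝ) :=
  (fun j => fderiv ℝ p z (0, Pi.single j 1),
   fun j => - fderiv ℝ p z (Pi.single j 1, 0))

/-- Kinetic energy k(x,ξ) = (1/2) Σ_{j,k} a_{jk}(x) ξ_j ξ_k. -/
noncomputable def kin (n : ℕ) (a : Fin n → Fin n → (Fin n → ℝ) → ℝ)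
    (z : (Fin n → ℝ) × (Fin n → ℝ)) : ℝ :=
  (1 / 2) * ∑ j : Fin n, ∑ l : Fin n, a j l z.1 * z.2 j * z.2 l




lemma clm_decomp {n : ℕ} (L : ((Fin n → ℝ) × (Fin n → ℝ)) →L[ℝ] ℝ) (X Y : Fin n → ℝ) :
    L (X, Y) = ∑ j, X j * L (Pi.single j 1, 0) + ∑ j, Y j * L (0, Pi.single j 1) := by
  have hX : ((X, Y) : (Fin n → ℝ) × (Fin n → ℝ))
      = (∑ j, X j • ((Pi.single j 1 : Fin n → ℝ), (0 : Fin n → ℝ)))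
        + ∑ j, Y j • ((0 : Fin n → ℝ), (Pi.single j 1 : Fin n → ℝ)) := by
    have h1 : ∀ (W : Fin n → ℝ) (j : Fin n), W j • (Pi.single j 1 : Fin n → ℝ) = Pi.single j (W j) := by
      intro W j; funext k
      simp [Pi.single_apply, mul_ite]
    apply Prod.ext
    · simp only [Prod.fst_add, Prod.fst_sum, Prod.smul_mk, Prod.mk_add_mk]
      simp [h1, Finset.univ_sum_single]
    · simp only [Prod.snd_add, Prod.snd_sum, Prod.smul_mk, Prod.mk_add_mk]
      simp [h1, Finset.univ_sum_single]
  rw [hX, map_add, map_sum, map_sum]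
  congr 1 <;> apply Finset.sum_congr rfl <;> intro j _ <;> rw [map_smul, smul_eq_mul]

lemma fderiv_hamVF_zero {n : ℕ} (p : (Fin n → ℝ) × (Fin n → ℝ) → ℝ)
    (z : (Fin n → ℝ) × (Fin n → ℝ)) :
    fderiv ℝ p z (hamVF n p z) = 0 := by
  set L := fderiv ℝ p z with hL
  have : hamVF n p z = ((fun j => L (0, Pi.single j 1)), (fun j => - L (Pi.single j 1, 0))) := rfl
  rw [this, clm_decomp]
  rw [← Finset.sum_add_distrib]
  apply Finset.sum_eq_zero
  intro j _
  ring

lemma energy_const {n : ℕ} (k : (Fin n → ℝ) × (Fin n → ℝ) → ℝ) (hk : ContDiff ℝ (⊤ : ℕ∞) k)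
    (γ : ℝ → (Fin n → ℝ) × (Fin n → ℝ))
    (hγ : ∀ t, HasDerivAt γ (hamVF n k (γ t)) t) :
    ∀ t, k (γ t) = k (γ 0) := by
  have hd : ∀ t, HasDerivAt (fun s => k (γ s)) 0 t := by
    intro t
    have h1 := ((hk.differentiable (by simp) (γ t)).hasFDerivAt).comp_hasDerivAt t (hγ t)
    rwa [fderiv_hamVF_zero] at h1
  intro t
  exact is_const_of_deriv_eq_zero (fun s => (hd s).differentiableAt) (fun s => (hd s).deriv) t 0




noncomputable def PP (n : ℕ) (j : Fin n) : ((Fin n → ℝ) × (Fin n → ℝ)) →L[ℝ] ℝ :=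
  (ContinuousLinearMap.proj j).comp (ContinuousLinearMap.snd ℝ (Fin n → ℝ) (Fin n → ℝ))

noncomputable def kinD (n : ℕ) (a : Fin n → Fin n → (Fin n → ℝ) → ℝ)
    (z : (Fin n → ℝ) × (Fin n → ℝ)) : ((Fin n → ℝ) × (Fin n → ℝ)) →L[ℝ] ℝ :=
  (1/2 : ℝ) • ∑ j : Fin n, ∑ l : Fin n,
    ((a j l z.1 * z.2 j) • PP n l + z.2 l • (a j l z.1 • PP n j +
      z.2 j • ((fderiv ℝ (a j l) z.1).comp (ContinuousLinearMap.fst ℝ (Fin n → ℝ) (Fin n → ℝ)))))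

lemma kin_hasFDerivAt {n : ℕ} (a : Fin n → Fin n → (Fin n → ℝ) → ℝ)
    (ha_smooth : ∀ j l, ContDiff ℝ (⊤ : ℕ∞) (a j l)) (z : (Fin n → ℝ) × (Fin n → ℝ)) :
    HasFDerivAt (kin n a) (kinD n a z) z := by
  unfold kin kinD
  apply HasFDerivAt.const_mul
  apply HasFDerivAt.fun_sum
  intro j _
  apply HasFDerivAt.fun_sum
  intro l _
  have h1 : HasFDerivAt (fun w : (Fin n → ℝ) × (Fin n → ℝ) => a j l w.1)
      ((fderiv ℝ (a j l) z.1).comp (ContinuousLinearMap.fst ℝ (Fin n → ℝ) (Fin n → ℝ))) z :=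
    (((ha_smooth j l).differentiable (by simp) z.1).hasFDerivAt).comp z hasFDerivAt_fst
  have h2 : HasFDerivAt (fun w : (Fin n → ℝ) × (Fin n → ℝ) => w.2 j) (PP n j) z :=
    (PP n j).hasFDerivAt
  have h3 : HasFDerivAt (fun w : (Fin n → ℝ) × (Fin n → ℝ) => w.2 l) (PP n l) z :=
    (PP n l).hasFDerivAt
  exact (h1.mul h2).mul h3

lemma kinD_apply_snd {n : ℕ} (a : Fin n → Fin n → (Fin n → ℝ) → ℝ)
    (z : (Fin n → ℝ) × (Fin n → ℝ)) (m : Fin n) :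
    kinD n a z ((0 : Fin n → ℝ), (Pi.single m 1 : Fin n → ℝ))
      = (1/2) * (∑ l, a m l z.1 * z.2 l + ∑ i, a i m z.1 * z.2 i) := by
  unfold kinD PP
  simp only [ContinuousLinearMap.smul_apply, ContinuousLinearMap.sum_apply,
    ContinuousLinearMap.add_apply, ContinuousLinearMap.comp_apply,
    ContinuousLinearMap.coe_fst', ContinuousLinearMap.coe_snd',
    ContinuousLinearMap.proj_apply, map_zero, Pi.single_apply, smul_eq_mul,
    mul_ite, mul_one, mul_zero, add_zero]
  congr 1
  rw [show (∑ x : Fin n, ∑ x_1 : Fin n, ((if x_1 = m then a x x_1 z.1 * z.2 x else 0) + if x = m then z.2 x_1 * a x x_1 z.1 else 0)) = (∑ x : Fin n, ∑ x_1 : Fin n, (if x_1 = m then a x x_1 z.1 * z.2 x else 0)) + ∑ x : Fin n, ∑ x_1 : Fin n, (if x = m then z.2 x_1 * a x x_1 z.1 else 0) by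
    rw [← Finset.sum_add_distrib]; exact Finset.sum_congr rfl fun x _ => Finset.sum_add_distrib]
  rw [add_comm]
  congr 1
  · rw [show (∑ x : Fin n, ∑ x_1 : Fin n, (if x = m then z.2 x_1 * a x x_1 z.1 else 0)) = ∑ x : Fin n, (if x = m then ∑ x_1 : Fin n, z.2 x_1 * a x x_1 z.1 else 0) by
      exact Finset.sum_congr rfl fun x _ => by split <;> simp]
    rw [Finset.sum_ite_eq' Finset.univ m (fun x => ∑ x_1 : Fin n, z.2 x_1 * a x x_1 z.1)]
    simp [mul_comm]
  · exact Finset.sum_congr rfl fun x _ => by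
      rw [Finset.sum_ite_eq' Finset.univ m (fun l => a x l z.1 * z.2 x)]
      simp

lemma kinD_apply_fst {n : ℕ} (a : Fin n → Fin n → (Fin n → ℝ) → ℝ)
    (z : (Fin n → ℝ) × (Fin n → ℝ)) (m : Fin n) :
    kinD n a z ((Pi.single m 1 : Fin n → ℝ), (0 : Fin n → ℝ))
      = (1/2) * ∑ j, ∑ l, fderiv ℝ (a j l) z.1 (Pi.single m 1) * z.2 j * z.2 l := by
  unfold kinD PP
  simp only [ContinuousLinearMap.smul_apply, ContinuousLinearMap.sum_apply,
    ContinuousLinearMap.add_apply, ContinuousLinearMap.comp_apply,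
    ContinuousLinearMap.coe_fst', ContinuousLinearMap.coe_snd',
    ContinuousLinearMap.proj_apply, Pi.zero_apply, smul_eq_mul,
    mul_zero, zero_add, add_zero, smul_eq_mul]
  congr 1
  refine Finset.sum_congr rfl fun j _ => Finset.sum_congr rfl fun l _ => by ring

lemma kin_contDiff {n : ℕ} (a : Fin n → Fin n → (Fin n → ℝ) → ℝ)
    (ha_smooth : ∀ j l, ContDiff ℝ (⊤ : ℕ∞) (a j l)) : ContDiff ℝ (⊤ : ℕ∞) (kin n a) := by
  unfold kin
  apply ContDiff.mul contDiff_const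
  apply ContDiff.sum; intro j _
  apply ContDiff.sum; intro l _
  have h2 : ContDiff ℝ (⊤ : ℕ∞) (fun z : (Fin n → ℝ) × (Fin n → ℝ) => z.2 j) :=
    ((ContinuousLinearMap.proj j).comp (ContinuousLinearMap.snd ℝ (Fin n → ℝ) (Fin n → ℝ))).contDiff
  have h3 : ContDiff ℝ (⊤ : ℕ∞) (fun z : (Fin n → ℝ) × (Fin n → ℝ) => z.2 l) :=
    ((ContinuousLinearMap.proj l).comp (ContinuousLinearMap.snd ℝ (Fin n → ℝ) (Fin n → ℝ))).contDiff
  exact (((ha_smooth j l).comp contDiff_fst).mul h2).mul h3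

lemma hamVF_continuous {n : ℕ} (p : (Fin n → ℝ) × (Fin n → ℝ) → ℝ) (hp : ContDiff ℝ (⊤ : ℕ∞) p) :
    Continuous (hamVF n p) := by
  have hf : Continuous (fun z => fderiv ℝ p z) := hp.continuous_fderiv (by simp)
  unfold hamVF
  refine Continuous.prodMk ?_ ?_
  · exact continuous_pi fun j => hf.clm_apply continuous_const
  · exact continuous_pi fun j => (hf.clm_apply continuous_const).neg

noncomputable def ang {n : ℕ} (x : Fin n → ℝ) : ℝ := Real.sqrt (1 + ‖x‖ ^ 2)

lemma one_le_ang {n : ℕ} (x : Fin n → ℝ) : 1 ≤ ang x :=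
  Real.one_le_sqrt.mpr (by nlinarith [norm_nonneg x])

lemma ang_pos {n : ℕ} (x : Fin n → ℝ) : 0 < ang x := lt_of_lt_of_le one_pos (one_le_ang x)

lemma norm_le_ang {n : ℕ} (x : Fin n → ℝ) : ‖x‖ ≤ ang x := by
  rw [show ‖x‖ = Real.sqrt (‖x‖^2) by rw [Real.sqrt_sq (norm_nonneg x)]]
  exact Real.sqrt_le_sqrt (by linarith)

lemma ang_rpow_le_one {n : ℕ} (x : Fin n → ℝ) {e : ℝ} (he : e ≤ 0) : ang x ^ e ≤ 1 :=
  Real.rpow_le_one_of_one_le_of_nonpos (one_le_ang x) he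

lemma ang_rpow_le {n : ℕ} (x : Fin n → ℝ) {e r : ℝ} (he : e ≤ 0) (hr : 0 < r)
    (hrx : r ≤ ‖x‖) : ang x ^ e ≤ r ^ e :=
  Real.rpow_le_rpow_of_nonpos hr (le_trans hrx (norm_le_ang x)) he

section coeff
variable {n : ℕ} {μ : ℝ} (a : Fin n → Fin n → (Fin n → ℝ) → ℝ) (C : ℕ → ℝ)

variable (hne : Nonempty (Fin n)) (hμ0 : 0 ≤ μ)
variable (ha : ∀ (j l : Fin n) (m : ℕ) (x : Fin n → ℝ),
      ‖iteratedFDeriv ℝ m (fun y => a j l y - if j = l then 1 else 0) x‖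
        ≤ C m * Real.sqrt (1 + ‖x‖ ^ 2) ^ (-μ - m))

include ha

include hne in
lemma hC_nonneg (m : ℕ) : 0 ≤ C m := by
  obtain ⟨j⟩ := hne
  have h1 := ha j j m 0
  simp only [norm_zero, ne_eq, OfNat.ofNat_ne_zero, not_false_eq_true, zero_pow, add_zero,
    Real.sqrt_one, Real.one_rpow, mul_one] at h1
  exact le_trans (norm_nonneg _) h1

lemma hA0 (j l : Fin n) (x : Fin n → ℝ) :
    |a j l x - (if j = l then 1 else 0)| ≤ C 0 * ang x ^ (-μ) := by
  have h := ha j l 0 x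
  rw [norm_iteratedFDeriv_zero] at h
  simpa [ang, Real.norm_eq_abs] using h

include hne hμ0 in
lemma hA0' (j l : Fin n) (x : Fin n → ℝ) : |a j l x| ≤ 1 + C 0 := by
  have h1 := hA0 a C ha j l x
  have h2 : ang x ^ (-μ) ≤ 1 := ang_rpow_le_one x (neg_nonpos.mpr hμ0)
  have hC0 := hC_nonneg a C hne ha 0
  have h3 : |a j l x| ≤ |if j = l then (1:ℝ) else 0| + |a j l x - if j = l then 1 else 0| := by
    calc |a j l x| = |(if j = l then (1:ℝ) else 0) + (a j l x - if j = l then 1 else 0)| := by ring_nf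
      _ ≤ _ := abs_add_le _ _
  have h4 : |if j = l then (1:ℝ) else 0| ≤ 1 := by split <;> simp
  nlinarith

lemma hA1 (j l : Fin n) (x v : Fin n → ℝ) :
    |fderiv ℝ (a j l) x v| ≤ C 1 * ang x ^ (-μ - 1) * ‖v‖ := by
  have h := ha j l 1 x
  have he : fderiv ℝ (a j l) x v
      = iteratedFDeriv ℝ 1 (fun y => a j l y - if j = l then 1 else 0) x (fun _ => v) := by
    rw [iteratedFDeriv_one_apply]
    rw [fderiv_sub_const]
  rw [he]
  have hle := (iteratedFDeriv ℝ 1 (fun y => a j l y - if j = l then 1 else 0) x).le_opNorm (fun _ => v)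
  simp only [Finset.prod_const, Finset.card_univ, Fintype.card_fin, pow_one] at hle
  calc |iteratedFDeriv ℝ 1 _ x fun _ => v| ≤ ‖iteratedFDeriv ℝ 1 (fun y => a j l y - if j = l then 1 else 0) x‖ * ‖v‖ := hle
    _ ≤ (C 1 * Real.sqrt (1 + ‖x‖ ^ 2) ^ (-μ - 1)) * ‖v‖ := by
        apply mul_le_mul_of_nonneg_right _ (norm_nonneg v)
        simpa using h
    _ = C 1 * ang x ^ (-μ - 1) * ‖v‖ := by rw [ang]

end coeff


lemma tendsto_of_norm_deriv_le {F : Type*} [NormedAddCommGroup F] [NormedSpace ℝ F]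
    [CompleteSpace F] (g g' : ℝ → F) (K ν T : ℝ) (hT : 0 < T) (hν : 1 < ν)
    (hg : ∀ t, HasDerivAt g (g' t) t) (hc : Continuous g')
    (hb : ∀ t, T ≤ t → ‖g' t‖ ≤ K * t ^ (-ν)) :
    ∃ L, Tendsto g atTop (nhds L) := by
  have hK : 0 ≤ K := by
    have h1 := hb T le_rfl
    have h2 : (0:ℝ) < T ^ (-ν) := Real.rpow_pos_of_pos hT _
    nlinarith [norm_nonneg (g' T)]
  have key : ∀ s t : ℝ, T ≤ s → s ≤ t → ‖g t - g s‖ ≤ K / (ν - 1) * s ^ (1 - ν) := by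
    intro s t hTs hst
    have hs0 : (0:ℝ) < s := lt_of_lt_of_le hT hTs
    have ftc : ∫ u in s..t, g' u = g t - g s :=
      intervalIntegral.integral_eq_sub_of_hasDerivAt (fun u _ => hg u)
        (hc.continuousOn.intervalIntegrable)
    rw [← ftc]
    have hbd : ∀ᵐ u ∂(MeasureTheory.volume.restrict (Set.uIoc s t)), ‖g' u‖ ≤ K * u ^ (-ν) := by
      refine (MeasureTheory.ae_restrict_iff' measurableSet_uIoc).2 (MeasureTheory.ae_of_all _ ?_)
      intro u hu
      rw [Set.uIoc_of_le hst] at hu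
      exact hb u (le_trans hTs (le_of_lt hu.1))
    have hint : IntervalIntegrable (fun u => K * u ^ (-ν)) MeasureTheory.volume s t := by
      apply ContinuousOn.intervalIntegrable
      apply continuousOn_const.mul
      intro u hu
      rw [Set.uIcc_of_le hst] at hu
      exact (Real.continuousAt_rpow_const u (-ν) (Or.inl (ne_of_gt (lt_of_lt_of_le hs0 hu.1)))).continuousWithinAt
    refine le_trans (intervalIntegral.norm_integral_le_abs_of_norm_le hbd hint) ?_
    have hval : ∫ u in s..t, K * u ^ (-ν) = K * ((t ^ (1 - ν) - s ^ (1 - ν)) / (1 - ν)) := by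
      rw [intervalIntegral.integral_const_mul, integral_rpow]
      · rw [show -ν + 1 = 1 - ν by ring]
      · right
        constructor
        · intro h; rw [neg_eq_iff_eq_neg] at h; linarith
        · rw [Set.uIcc_of_le hst]
          intro h0
          exact absurd h0.1 (not_le.mpr hs0)
    rw [hval]
    have h1 : (0:ℝ) ≤ t ^ (1 - ν) := Real.rpow_nonneg (by linarith) _
    have h2 : t ^ (1 - ν) ≤ s ^ (1 - ν) :=
      Real.rpow_le_rpow_of_nonpos hs0 hst (by linarith)
    have h3 : K * ((t ^ (1 - ν) - s ^ (1 - ν)) / (1 - ν)) = K * ((s ^ (1 - ν) - t ^ (1 - ν)) / (ν - 1)) := by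
      have e1 : (1 - ν) ≠ 0 := by linarith
      have e2 : (ν - 1) ≠ 0 := by linarith
      field_simp
      ring
    rw [h3, abs_of_nonneg (mul_nonneg hK (div_nonneg (by linarith) (by linarith)))]
    rw [div_mul_eq_mul_div, mul_div_assoc]
    have h4 : s ^ (1 - ν) - t ^ (1 - ν) ≤ s ^ (1 - ν) := by linarith
    gcongr
  -- Cauchy
  have hcauchy : CauchySeq g := by
    rw [Metric.cauchySeq_iff]
    intro ε hε
    have htend : Tendsto (fun s : ℝ => K / (ν - 1) * s ^ (1 - ν)) atTop (nhds 0) := by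
      have : Tendsto (fun s : ℝ => s ^ (-(ν - 1))) atTop (nhds 0) :=
        tendsto_rpow_neg_atTop (by linarith)
      have h0 := this.const_mul (K / (ν - 1))
      rw [mul_zero] at h0
      convert h0 using 2 with s
      norm_num
    have hev : ∀ᶠ s in atTop, K / (ν - 1) * s ^ (1 - ν) < ε ∧ T ≤ s := by
      filter_upwards [htend.eventually (gt_mem_nhds hε), eventually_ge_atTop T] with s h1 h2
      exact ⟨h1, h2⟩
    obtain ⟨N, hN⟩ := eventually_atTop.mp hev
    refine ⟨N, fun m hm k hk => ?_⟩
    rcases le_total m k with h | h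
    · rw [dist_comm, dist_eq_norm]
      exact lt_of_le_of_lt (key m k (hN m hm).2 h) (hN m hm).1
    · rw [dist_eq_norm]
      exact lt_of_le_of_lt (key k m (hN k hk).2 h) (hN k hk).1
  exact cauchySeq_tendsto_of_complete hcauchy


-- helpers
lemma pi_norm_le_of_abs_le {n : ℕ} (w : Fin n → ℝ) (b : ℝ) (hb : 0 ≤ b)
    (h : ∀ j, |w j| ≤ b) : ‖w‖ ≤ b := by
  rw [pi_norm_le_iff_of_nonneg hb]
  intro i; rw [Real.norm_eq_abs]; exact h i

lemma abs_sum_mul_le {n : ℕ} (u v : Fin n → ℝ) : |∑ j, u j * v j| ≤ n * (‖u‖ * ‖v‖) := by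
  calc |∑ j, u j * v j| ≤ ∑ j, |u j * v j| := Finset.abs_sum_le_sum_abs _ _
    _ ≤ ∑ _j : Fin n, ‖u‖ * ‖v‖ := by
        apply Finset.sum_le_sum
        intro j _
        rw [abs_mul]
        exact mul_le_mul (by rw [← Real.norm_eq_abs]; exact norm_le_pi_norm u j)
          (by rw [← Real.norm_eq_abs]; exact norm_le_pi_norm v j) (abs_nonneg _) (norm_nonneg _)
    _ = n * (‖u‖ * ‖v‖) := by rw [Finset.sum_const, Finset.card_univ, Fintype.card_fin, nsmul_eq_mul]

lemma norm_sq_le_sum_sq {n : ℕ} (w : Fin n → ℝ) : ‖w‖ ^ 2 ≤ ∑ j, w j ^ 2 := by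
  have h1 : ‖w‖ ≤ Real.sqrt (∑ j, w j ^ 2) := by
    apply pi_norm_le_of_abs_le _ _ (Real.sqrt_nonneg _)
    intro j
    rw [show |w j| = Real.sqrt (w j ^ 2) by rw [Real.sqrt_sq_eq_abs]]
    apply Real.sqrt_le_sqrt
    exact Finset.single_le_sum (f := fun l => w l ^ 2) (fun l _ => sq_nonneg _) (Finset.mem_univ j)
  calc ‖w‖ ^ 2 ≤ Real.sqrt (∑ j, w j ^ 2) ^ 2 := by
        apply pow_le_pow_left₀ (norm_nonneg w) h1
    _ = ∑ j, w j ^ 2 := Real.sq_sqrt (Finset.sum_nonneg fun l _ => sq_nonneg _)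

lemma sum_sq_le_norm_sq {n : ℕ} (w : Fin n → ℝ) : ∑ j, w j ^ 2 ≤ n * ‖w‖ ^ 2 := by
  calc ∑ j, w j ^ 2 ≤ ∑ _j : Fin n, ‖w‖ ^ 2 := by
        apply Finset.sum_le_sum
        intro j _
        have h1 : |w j| ≤ ‖w‖ := by rw [← Real.norm_eq_abs]; exact norm_le_pi_norm w j
        calc w j ^ 2 = |w j| ^ 2 := (sq_abs _).symm
          _ ≤ ‖w‖ ^ 2 := by apply pow_le_pow_left₀ (abs_nonneg _) h1
    _ = n * ‖w‖ ^ 2 := by rw [Finset.sum_const, Finset.card_univ, Fintype.card_fin, nsmul_eq_mul]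

lemma linear_lower (f f' : ℝ → ℝ) (c T : ℝ) (hf : ∀ t, HasDerivAt f (f' t) t)
    (h : ∀ t, T ≤ t → c ≤ f' t) : ∀ t, T ≤ t → f T + c * (t - T) ≤ f t := by
  intro t ht
  have hg : ∀ s, HasDerivAt (fun u => f u - c * u) (f' s - c) s := by
    intro s
    simpa using (hf s).fun_sub ((hasDerivAt_id s).const_mul c)
  have hmono : MonotoneOn (fun u => f u - c * u) (Set.Ici T) := by
    apply monotoneOn_of_deriv_nonneg (convex_Ici T)
    · exact (Continuous.continuousOn (by
        have : Differentiable ℝ (fun u => f u - c * u) := fun s => (hg s).differentiableAt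
        exact this.continuous))
    · intro s _
      exact (hg s).differentiableAt.differentiableWithinAt
    · intro s hs
      rw [(hg s).deriv]
      rw [interior_Ici] at hs
      linarith [h s (le_of_lt hs)]
  have := hmono (Set.self_mem_Ici) (Set.mem_Ici.mpr ht) ht
  simp only at this
  linarith

lemma hamVF_kin_fst {n : ℕ} (a : Fin n → Fin n → (Fin n → ℝ) → ℝ)
    (ha_smooth : ∀ j l, ContDiff ℝ (⊤ : ℕ∞) (a j l)) (z : (Fin n → ℝ) × (Fin n → ℝ)) (m : Fin n) :
    (hamVF n (kin n a) z).1 m = (1/2) * (∑ l, a m l z.1 * z.2 l + ∑ i, a i m z.1 * z.2 i) := by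
  show fderiv ℝ (kin n a) z ((0 : Fin n → ℝ), (Pi.single m 1 : Fin n → ℝ)) = _
  rw [(kin_hasFDerivAt a ha_smooth z).fderiv, kinD_apply_snd a z m]

lemma hamVF_kin_snd {n : ℕ} (a : Fin n → Fin n → (Fin n → ℝ) → ℝ)
    (ha_smooth : ∀ j l, ContDiff ℝ (⊤ : ℕ∞) (a j l)) (z : (Fin n → ℝ) × (Fin n → ℝ)) (m : Fin n) :
    (hamVF n (kin n a) z).2 m
      = -((1/2) * ∑ j, ∑ l, fderiv ℝ (a j l) z.1 (Pi.single m 1) * z.2 j * z.2 l) := by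
  show -(fderiv ℝ (kin n a) z ((Pi.single m 1 : Fin n → ℝ), (0 : Fin n → ℝ))) = _
  rw [(kin_hasFDerivAt a ha_smooth z).fderiv, kinD_apply_fst a z m]

set_option linter.unusedSectionVars false

section est
variable {n : ℕ} {μ : ℝ} (a : Fin n → Fin n → (Fin n → ℝ) → ℝ) (C : ℕ → ℝ)
variable (ha_smooth : ∀ j l, ContDiff ℝ (⊤ : ℕ∞) (a j l))
variable (ha : ∀ (j l : Fin n) (m : ℕ) (x : Fin n → ℝ),
      ‖iteratedFDeriv ℝ m (fun y => a j l y - if j = l then 1 else 0) x‖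
        ≤ C m * Real.sqrt (1 + ‖x‖ ^ 2) ^ (-μ - m))

variable (hne : Nonempty (Fin n))
include ha hne

/-- kinetic energy close to flat one -/
lemma kin_approx (z : (Fin n → ℝ) × (Fin n → ℝ)) :
    |2 * kin n a z - ∑ j, z.2 j ^ 2| ≤ n^2 * C 0 * ang z.1 ^ (-μ) * ‖z.2‖^2 := by
  have hC0 : 0 ≤ C 0 := hC_nonneg a C hne ha 0
  have hdiag : ∑ j, z.2 j ^ 2 = ∑ j, ∑ l, (if j = l then (1:ℝ) else 0) * z.2 j * z.2 l := by
    apply Finset.sum_congr rfl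
    intro j _
    rw [Finset.sum_congr rfl fun l (_ : l ∈ Finset.univ) =>
      (show (if j = l then (1:ℝ) else 0) * z.2 j * z.2 l
        = if j = l then z.2 j * z.2 l else 0 by split <;> simp)]
    rw [Finset.sum_ite_eq Finset.univ j (fun l => z.2 j * z.2 l)]
    simp [sq]
  have hkin : 2 * kin n a z = ∑ j, ∑ l, a j l z.1 * z.2 j * z.2 l := by
    unfold kin; ring
  have hdiff : 2 * kin n a z - ∑ j, z.2 j ^ 2
      = ∑ j, ∑ l, (a j l z.1 - if j = l then 1 else 0) * z.2 j * z.2 l := by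
    rw [hkin, hdiag, ← Finset.sum_sub_distrib]
    apply Finset.sum_congr rfl; intro j _
    rw [← Finset.sum_sub_distrib]
    apply Finset.sum_congr rfl; intro l _
    ring
  rw [hdiff]
  calc |∑ j, ∑ l, (a j l z.1 - if j = l then 1 else 0) * z.2 j * z.2 l|
      ≤ ∑ j, |∑ l, (a j l z.1 - if j = l then 1 else 0) * z.2 j * z.2 l| :=
        Finset.abs_sum_le_sum_abs _ _
    _ ≤ ∑ _j : Fin n, ∑ _l : Fin n, C 0 * ang z.1 ^ (-μ) * ‖z.2‖^2 := by
        apply Finset.sum_le_sum; intro j _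
        refine le_trans (Finset.abs_sum_le_sum_abs _ _) ?_
        apply Finset.sum_le_sum; intro l _
        rw [abs_mul, abs_mul]
        have h1 := hA0 a C ha j l z.1
        have h2 : |z.2 j| ≤ ‖z.2‖ := by rw [← Real.norm_eq_abs]; exact norm_le_pi_norm z.2 j
        have h3 : |z.2 l| ≤ ‖z.2‖ := by rw [← Real.norm_eq_abs]; exact norm_le_pi_norm z.2 l
        have hang : (0:ℝ) ≤ ang z.1 ^ (-μ) := le_of_lt (Real.rpow_pos_of_pos (ang_pos z.1) _)
        calc |a j l z.1 - if j = l then 1 else 0| * |z.2 j| * |z.2 l|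
            ≤ (C 0 * ang z.1 ^ (-μ)) * ‖z.2‖ * ‖z.2‖ := by
              have hang0 : (0:ℝ) ≤ C 0 * ang z.1 ^ (-μ) := mul_nonneg hC0 hang
              apply mul_le_mul (mul_le_mul h1 h2 (abs_nonneg _) hang0) h3 (abs_nonneg _)
              exact mul_nonneg hang0 (norm_nonneg _)
          _ = C 0 * ang z.1 ^ (-μ) * ‖z.2‖^2 := by ring
    _ = n^2 * C 0 * ang z.1 ^ (-μ) * ‖z.2‖^2 := by
        simp [Finset.sum_const, Finset.card_univ, nsmul_eq_mul]; ring

include ha_smooth in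
lemma hamVF_snd_bound (z : (Fin n → ℝ) × (Fin n → ℝ)) :
    ‖(hamVF n (kin n a) z).2‖ ≤ 1/2 * n^2 * C 1 * ang z.1 ^ (-μ-1) * ‖z.2‖^2 := by
  have hC1 : 0 ≤ C 1 := hC_nonneg a C hne ha 1
  have hang : (0:ℝ) ≤ ang z.1 ^ (-μ-1) := le_of_lt (Real.rpow_pos_of_pos (ang_pos z.1) _)
  apply pi_norm_le_of_abs_le _ _ (by positivity)
  intro m
  rw [hamVF_kin_snd a ha_smooth z m, abs_neg]
  calc |1/2 * ∑ j, ∑ l, fderiv ℝ (a j l) z.1 (Pi.single m 1) * z.2 j * z.2 l|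
      ≤ 1/2 * ∑ j, ∑ l, |fderiv ℝ (a j l) z.1 (Pi.single m 1) * z.2 j * z.2 l| := by
        rw [abs_mul, abs_of_nonneg (show (0:ℝ) ≤ 1/2 by norm_num)]
        apply mul_le_mul_of_nonneg_left _ (by norm_num : (0:ℝ) ≤ 1/2)
        exact le_trans (Finset.abs_sum_le_sum_abs _ _)
          (Finset.sum_le_sum fun j _ => Finset.abs_sum_le_sum_abs _ _)
    _ ≤ 1/2 * ∑ _j : Fin n, ∑ _l : Fin n, C 1 * ang z.1 ^ (-μ-1) * ‖z.2‖^2 := by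
        apply mul_le_mul_of_nonneg_left _ (by norm_num : (0:ℝ) ≤ 1/2)
        apply Finset.sum_le_sum; intro j _
        apply Finset.sum_le_sum; intro l _
        rw [abs_mul, abs_mul]
        have h1 := hA1 a C ha j l z.1 (Pi.single m 1)
        rw [Pi.norm_single, norm_one, mul_one] at h1
        have h2 : |z.2 j| ≤ ‖z.2‖ := by rw [← Real.norm_eq_abs]; exact norm_le_pi_norm z.2 j
        have h3 : |z.2 l| ≤ ‖z.2‖ := by rw [← Real.norm_eq_abs]; exact norm_le_pi_norm z.2 l
        have h4 : (0:ℝ) ≤ C 1 * ang z.1 ^ (-μ-1) := mul_nonneg hC1 hang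
        calc |fderiv ℝ (a j l) z.1 (Pi.single m 1)| * |z.2 j| * |z.2 l|
            ≤ C 1 * ang z.1 ^ (-μ-1) * ‖z.2‖ * ‖z.2‖ := by
              apply mul_le_mul (mul_le_mul h1 h2 (abs_nonneg _) h4) h3 (abs_nonneg _)
              exact mul_nonneg h4 (norm_nonneg _)
          _ = C 1 * ang z.1 ^ (-μ-1) * ‖z.2‖^2 := by ring
    _ = 1/2 * n^2 * C 1 * ang z.1 ^ (-μ-1) * ‖z.2‖^2 := by
        simp [Finset.sum_const, Finset.card_univ, nsmul_eq_mul]; ring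

include ha_smooth in
lemma hamVF_fst_sub_bound (z : (Fin n → ℝ) × (Fin n → ℝ)) :
    ‖(fun j => (hamVF n (kin n a) z).1 j - z.2 j : Fin n → ℝ)‖
      ≤ n * C 0 * ang z.1 ^ (-μ) * ‖z.2‖ := by
  have hC0 : 0 ≤ C 0 := hC_nonneg a C hne ha 0
  have hang : (0:ℝ) ≤ ang z.1 ^ (-μ) := le_of_lt (Real.rpow_pos_of_pos (ang_pos z.1) _)
  apply pi_norm_le_of_abs_le _ _ (by positivity)
  intro m
  rw [hamVF_kin_fst a ha_smooth z m]
  have hδ : z.2 m = 1/2 * (∑ l, (if m = l then (1:ℝ) else 0) * z.2 l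
      + ∑ i, (if i = m then (1:ℝ) else 0) * z.2 i) := by
    rw [Finset.sum_congr rfl fun l (_ : l ∈ Finset.univ) =>
      (show (if m = l then (1:ℝ) else 0) * z.2 l = if m = l then z.2 l else 0 by split <;> simp)]
    rw [Finset.sum_congr rfl fun i (_ : i ∈ Finset.univ) =>
      (show (if i = m then (1:ℝ) else 0) * z.2 i = if i = m then z.2 i else 0 by split <;> simp)]
    rw [Finset.sum_ite_eq Finset.univ m (fun l => z.2 l),
      Finset.sum_ite_eq' Finset.univ m (fun i => z.2 i)]
    simp; ring
  rw [show 1/2 * (∑ l, a m l z.1 * z.2 l + ∑ i, a i m z.1 * z.2 i) - z.2 m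
      = 1/2 * ((∑ l, (a m l z.1 - if m = l then 1 else 0) * z.2 l)
        + ∑ i, (a i m z.1 - if i = m then 1 else 0) * z.2 i) by
    rw [hδ]
    simp only [sub_mul]
    rw [Finset.sum_sub_distrib, Finset.sum_sub_distrib]
    ring]
  have hbd : ∀ (g : Fin n → ℝ), (∀ i, |g i| ≤ C 0 * ang z.1 ^ (-μ))
      → |∑ i, g i * z.2 i| ≤ n * (C 0 * ang z.1 ^ (-μ)) * ‖z.2‖ := by
    intro g hg
    calc |∑ i, g i * z.2 i| ≤ ∑ i, |g i * z.2 i| := Finset.abs_sum_le_sum_abs _ _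
      _ ≤ ∑ _i : Fin n, (C 0 * ang z.1 ^ (-μ)) * ‖z.2‖ := by
          apply Finset.sum_le_sum; intro i _
          rw [abs_mul]
          exact mul_le_mul (hg i) (by rw [← Real.norm_eq_abs]; exact norm_le_pi_norm z.2 i)
            (abs_nonneg _) (mul_nonneg hC0 hang)
      _ = n * (C 0 * ang z.1 ^ (-μ)) * ‖z.2‖ := by
          rw [Finset.sum_const, Finset.card_univ, Fintype.card_fin, nsmul_eq_mul]; ring
  have h1 := hbd (fun l => a m l z.1 - if m = l then 1 else 0) (fun i => hA0 a C ha m i z.1)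
  have h2 := hbd (fun i => a i m z.1 - if i = m then 1 else 0) (fun i => hA0 a C ha i m z.1)
  calc |1/2 * (_ + _)| ≤ 1/2 * (|∑ l, (a m l z.1 - if m = l then 1 else 0) * z.2 l|
        + |∑ i, (a i m z.1 - if i = m then 1 else 0) * z.2 i|) := by
        rw [abs_mul, abs_of_nonneg (by norm_num : (0:ℝ) ≤ 1/2)]
        exact mul_le_mul_of_nonneg_left (abs_add_le _ _) (by norm_num)
    _ ≤ 1/2 * (n * (C 0 * ang z.1 ^ (-μ)) * ‖z.2‖ + n * (C 0 * ang z.1 ^ (-μ)) * ‖z.2‖) := by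
        apply mul_le_mul_of_nonneg_left (add_le_add h1 h2) (by norm_num)
    _ = n * C 0 * ang z.1 ^ (-μ) * ‖z.2‖ := by ring

include ha_smooth in
lemma hamVF_fst_dot (z : (Fin n → ℝ) × (Fin n → ℝ)) :
    ∑ j, (hamVF n (kin n a) z).1 j * z.2 j = 2 * kin n a z := by
  rw [Finset.sum_congr rfl fun j (_ : j ∈ Finset.univ) => by
    rw [hamVF_kin_fst a ha_smooth z j]]
  have expand : ∑ j, 1/2 * (∑ l, a j l z.1 * z.2 l + ∑ i, a i j z.1 * z.2 i) * z.2 j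
      = 1/2 * ((∑ j, ∑ l, a j l z.1 * z.2 l * z.2 j) + ∑ j, ∑ i, a i j z.1 * z.2 i * z.2 j) := by
    rw [← Finset.sum_add_distrib, Finset.mul_sum]
    apply Finset.sum_congr rfl; intro j _
    rw [mul_assoc, add_mul, Finset.sum_mul, Finset.sum_mul]
  have hswap : ∑ j : Fin n, ∑ i : Fin n, a i j z.1 * z.2 i * z.2 j
      = ∑ i : Fin n, ∑ j : Fin n, a i j z.1 * z.2 i * z.2 j := Finset.sum_comm
  have hfix : ∑ j : Fin n, ∑ l : Fin n, a j l z.1 * z.2 l * z.2 j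
      = ∑ j : Fin n, ∑ l : Fin n, a j l z.1 * z.2 j * z.2 l :=
    Finset.sum_congr rfl fun j _ => Finset.sum_congr rfl fun l _ => by ring
  rw [expand, hswap, hfix]
  unfold kin
  ring

end est


/-- under the short-range assumption |∂^α(a_{jk} − δ_{jk})| ≤ C_α⟨x⟩^{−μ−|α|}
with μ > 1, along a forward-nontrapping trajectory (y(t),η(t)) = exp(tH_k)(x₀,ξ₀) the
scattering data exist: ξ₊ = lim_{t→∞} η(t) and z₊ = lim_{t→∞} (y(t) − t η(t)), i.e. the
limit w₊(x₀,ξ₀) = lim_{t→+∞} exp(−tH_{p₀}) ∘ exp(tH_k)(x₀,ξ₀) exists. -/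
theorem stmt_11 (n : ℕ) (μ : ℝ) (hμ : 1 < μ)
    (a : Fin n → Fin n → (Fin n → ℝ) → ℝ)
    (ha_smooth : ∀ j l, ContDiff ℝ (⊤ : ℕ∞) (a j l))
    (C : ℕ → ℝ)
    (ha : ∀ (j l : Fin n) (m : ℕ) (x : Fin n → ℝ),
      ‖iteratedFDeriv ℝ m (fun y => a j l y - if j = l then 1 else 0) x‖
        ≤ C m * Real.sqrt (1 + ‖x‖ ^ 2) ^ (-μ - m))
    (x₀ ξ₀ : Fin n → ℝ) (hξ₀ : ξ₀ ≠ 0)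
    (γ : ℝ → (Fin n → ℝ) × (Fin n → ℝ))
    (hγ : ∀ t : ℝ, HasDerivAt γ (hamVF n (kin n a) (γ t)) t)
    (hγ0 : γ 0 = (x₀, ξ₀))
    (hnontrap : Tendsto (fun t => ‖(γ t).1‖) atTop atTop) :
    (∃ ξp : Fin n → ℝ, Tendsto (fun t => (γ t).2) atTop (nhds ξp)) ∧
    (∃ zp : Fin n → ℝ,
      Tendsto (fun t => (γ t).1 - t • (γ t).2) atTop (nhds zp)) := by
  classical
  have hne : Nonempty (Fin n) := by
    rcases Nat.eq_zero_or_pos n with h | h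
    · exfalso; apply hξ₀; subst h; funext i; exact i.elim0
    · exact ⟨⟨0, h⟩⟩
  have hn_pos : (0:ℝ) < n := by
    have := Fin.pos_iff_nonempty.mpr hne
    exact_mod_cast this
  have hμ0 : (0:ℝ) ≤ μ := by linarith
  have hC0 : 0 ≤ C 0 := hC_nonneg a C hne ha 0
  have hC1 : 0 ≤ C 1 := hC_nonneg a C hne ha 1
  have hγdiff : Differentiable ℝ γ := fun t => (hγ t).differentiableAt
  have hγcont : Continuous γ := hγdiff.continuous
  have hVcont : Continuous (fun t => hamVF n (kin n a) (γ t)) :=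
    (hamVF_continuous _ (kin_contDiff a ha_smooth)).comp hγcont
  have hyvec : ∀ t, HasDerivAt (fun s => (γ s).1) ((hamVF n (kin n a) (γ t)).1) t := fun t =>
    (ContinuousLinearMap.fst ℝ (Fin n → ℝ) (Fin n → ℝ)).hasFDerivAt.comp_hasDerivAt t (hγ t)
  have hηvec : ∀ t, HasDerivAt (fun s => (γ s).2) ((hamVF n (kin n a) (γ t)).2) t := fun t =>
    (ContinuousLinearMap.snd ℝ (Fin n → ℝ) (Fin n → ℝ)).hasFDerivAt.comp_hasDerivAt t (hγ t)
  have hycomp : ∀ (t : ℝ) (j : Fin n),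
      HasDerivAt (fun s => (γ s).1 j) ((hamVF n (kin n a) (γ t)).1 j) t := fun t j =>
    ((ContinuousLinearMap.proj j).comp
      (ContinuousLinearMap.fst ℝ (Fin n → ℝ) (Fin n → ℝ))).hasFDerivAt.comp_hasDerivAt t (hγ t)
  have hηcomp : ∀ (t : ℝ) (j : Fin n),
      HasDerivAt (fun s => (γ s).2 j) ((hamVF n (kin n a) (γ t)).2 j) t := fun t j =>
    ((ContinuousLinearMap.proj j).comp
      (ContinuousLinearMap.snd ℝ (Fin n → ℝ) (Fin n → ℝ))).hasFDerivAt.comp_hasDerivAt t (hγ t)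
  set E0 := kin n a (γ 0) with hE0def
  have hE : ∀ t, kin n a (γ t) = E0 := energy_const _ (kin_contDiff a ha_smooth) γ hγ
  have hangtop : Tendsto (fun t => ang (γ t).1) atTop atTop :=
    tendsto_atTop_mono (fun t => norm_le_ang _) hnontrap
  have hdecay : ∀ (c e : ℝ), e < 0 → Tendsto (fun t => c * ang (γ t).1 ^ e) atTop (nhds 0) := by
    intro c e he
    have h1 : Tendsto (fun x : ℝ => x ^ e) atTop (nhds 0) := by
      have := tendsto_rpow_neg_atTop (show (0:ℝ) < -e by linarith)
      simpa using this
    have h2 := (h1.comp hangtop).const_mul c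
    rw [mul_zero] at h2
    exact h2
  have hsmall : ∀ᶠ t in atTop, (n:ℝ)^2 * C 0 * ang (γ t).1 ^ (-μ) ≤ 1/2 :=
    ((hdecay ((n:ℝ)^2 * C 0) (-μ) (by linarith)).eventually
      (gt_mem_nhds (by norm_num : (0:ℝ) < 1/2))).mono fun t h => le_of_lt h
  have hη4E : ∀ t, (n:ℝ)^2 * C 0 * ang (γ t).1 ^ (-μ) ≤ 1/2 → ‖(γ t).2‖^2 ≤ 4 * E0 := by
    intro t h
    have h1 := kin_approx a C ha hne (γ t)
    rw [hE t] at h1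
    have h2 := norm_sq_le_sum_sq (γ t).2
    have h3 := abs_le.mp h1
    have h4 := mul_le_mul_of_nonneg_right h (sq_nonneg ‖(γ t).2‖)
    nlinarith [sq_nonneg ‖(γ t).2‖]
  have hE0_nonneg : 0 ≤ E0 := by
    obtain ⟨t, h⟩ := hsmall.exists
    have := hη4E t h
    nlinarith [sq_nonneg ‖(γ t).2‖]
  have hE0_pos : 0 < E0 := by
    rcases lt_or_eq_of_le hE0_nonneg with h | h
    · exact h
    exfalso
    obtain ⟨T0, hT0⟩ := eventually_atTop.mp hsmall
    have hη0 : ∀ t, T0 ≤ t → (γ t).2 = 0 := by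
      intro t ht
      have h4 := hη4E t (hT0 t ht)
      rw [← h] at h4
      have h5 : ‖(γ t).2‖ = 0 := by nlinarith [norm_nonneg (γ t).2]
      exact norm_eq_zero.mp h5
    have hy0 : ∀ t ∈ Set.Ici T0, HasDerivWithinAt (fun s => (γ s).1)
        (0 : Fin n → ℝ) (Set.Ici T0) t := by
      intro t ht
      have h1 := (hyvec t).hasDerivWithinAt (s := Set.Ici T0)
      have h2 : (hamVF n (kin n a) (γ t)).1 = 0 := by
        funext j
        rw [hamVF_kin_fst a ha_smooth (γ t) j, hη0 t ht]
        simp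
      rwa [h2] at h1
    have hconst : ∀ t, T0 ≤ t → (γ t).1 = (γ T0).1 := by
      intro t ht
      have hb := (convex_Ici T0).norm_image_sub_le_of_norm_hasDerivWithin_le
        (f' := fun _ => (0 : Fin n → ℝ)) (C := (0:ℝ)) hy0 (fun x _ => by simp) Set.self_mem_Ici
        (Set.mem_Ici.mpr ht)
      have hb0 : ‖(γ t).1 - (γ T0).1‖ ≤ 0 := by simpa using hb
      exact sub_eq_zero.mp (norm_le_zero_iff.mp hb0)
    obtain ⟨T2, hT2⟩ := eventually_atTop.mp
      ((hnontrap.eventually_ge_atTop (‖(γ T0).1‖ + 1)).and (eventually_ge_atTop T0))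
    have h6 := hT2 T2 le_rfl
    rw [hconst T2 h6.2] at h6
    linarith [h6.1]
  -- velocity bound
  set M := Real.sqrt (4 * E0) with hMdef
  have hM_pos : 0 < M := Real.sqrt_pos.mpr (by linarith)
  have hηM : ∀ t, (n:ℝ)^2 * C 0 * ang (γ t).1 ^ (-μ) ≤ 1/2 → ‖(γ t).2‖ ≤ M := by
    intro t h
    rw [show ‖(γ t).2‖ = Real.sqrt (‖(γ t).2‖^2) by rw [Real.sqrt_sq (norm_nonneg _)]]
    exact Real.sqrt_le_sqrt (hη4E t h)
  -- the radial quantity f = y ⬝ η and its derivative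
  set V := fun t => hamVF n (kin n a) (γ t) with hVdef
  set R := fun t => ∑ j, (γ t).1 j * (V t).2 j with hRdef
  set f := fun t => ∑ j, (γ t).1 j * (γ t).2 j with hfdef
  have hf' : ∀ t, HasDerivAt f (2 * E0 + R t) t := by
    intro t
    have h1 : HasDerivAt f
        (∑ j, ((V t).1 j * (γ t).2 j + (γ t).1 j * (V t).2 j)) t :=
      HasDerivAt.fun_sum fun j _ => (hycomp t j).fun_mul (hηcomp t j)
    have h2 : (∑ j, ((V t).1 j * (γ t).2 j + (γ t).1 j * (V t).2 j)) = 2 * E0 + R t := by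
      rw [Finset.sum_add_distrib, hamVF_fst_dot a C ha_smooth ha hne (γ t), hE t]
    rwa [h2] at h1
  -- bound on |R|
  set Kc := 1/2 * (n:ℝ)^3 * C 1 * M^2 with hKcdef
  have hRbound : ∀ t, (n:ℝ)^2 * C 0 * ang (γ t).1 ^ (-μ) ≤ 1/2 →
      |R t| ≤ Kc * ang (γ t).1 ^ (-μ) := by
    intro t h
    have hang1 : (0:ℝ) < ang (γ t).1 ^ (-μ-1) := Real.rpow_pos_of_pos (ang_pos _) _
    have h1 : ‖(V t).2‖ ≤ 1/2 * (n:ℝ)^2 * C 1 * ang (γ t).1 ^ (-μ-1) * M^2 := by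
      refine le_trans (hamVF_snd_bound a C ha_smooth ha hne (γ t)) ?_
      have := pow_le_pow_left₀ (norm_nonneg (γ t).2) (hηM t h) 2
      have hpre : (0:ℝ) ≤ 1/2 * (n:ℝ)^2 * C 1 * ang (γ t).1 ^ (-μ-1) := by
        apply mul_nonneg (mul_nonneg (by positivity) hC1) (le_of_lt hang1)
      exact mul_le_mul_of_nonneg_left this hpre
    calc |R t| ≤ n * (‖(γ t).1‖ * ‖(V t).2‖) := abs_sum_mul_le _ _
      _ ≤ n * (ang (γ t).1 * (1/2 * (n:ℝ)^2 * C 1 * ang (γ t).1 ^ (-μ-1) * M^2)) := by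
          apply mul_le_mul_of_nonneg_left _ (le_of_lt hn_pos)
          apply mul_le_mul (norm_le_ang _) h1 (norm_nonneg _) (le_of_lt (ang_pos _))
      _ = Kc * (ang (γ t).1 ^ (1:ℝ) * ang (γ t).1 ^ (-μ-1)) := by
          rw [Real.rpow_one, hKcdef]; ring
      _ = Kc * ang (γ t).1 ^ (-μ) := by
          rw [← Real.rpow_add (ang_pos _)]
          norm_num
  have hRsmall : ∀ᶠ t in atTop, |R t| ≤ E0 := by
    have h1 : ∀ᶠ t in atTop, Kc * ang (γ t).1 ^ (-μ) < E0 :=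
      (hdecay Kc (-μ) (by linarith)).eventually (gt_mem_nhds hE0_pos)
    filter_upwards [h1, hsmall] with t h1 h2
    exact le_of_lt (lt_of_le_of_lt (hRbound t h2) h1)
  obtain ⟨T1, hT1⟩ := eventually_atTop.mp (hRsmall.and hsmall)
  have hgrow : ∀ t, T1 ≤ t → f T1 + E0 * (t - T1) ≤ f t := by
    apply linear_lower f (fun t => 2 * E0 + R t) E0 T1 hf'
    intro t ht
    have := (hT1 t ht).1
    have h2 := (abs_le.mp this).1
    linarith
  have hfub : ∀ t, T1 ≤ t → f t ≤ n * M * ‖(γ t).1‖ := by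
    intro t ht
    calc f t ≤ |f t| := le_abs_self _
      _ ≤ n * (‖(γ t).1‖ * ‖(γ t).2‖) := abs_sum_mul_le _ _
      _ ≤ n * (‖(γ t).1‖ * M) := by
          apply mul_le_mul_of_nonneg_left _ (le_of_lt hn_pos)
          exact mul_le_mul_of_nonneg_left (hηM t (hT1 t ht).2) (norm_nonneg _)
      _ = n * M * ‖(γ t).1‖ := by ring
  -- linear growth of ‖y‖
  set c2 := E0 / (2 * n * M) with hc2def
  have hnM : (0:ℝ) < n * M := mul_pos hn_pos hM_pos
  have hc2 : 0 < c2 := div_pos hE0_pos (by positivity)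
  have hygrow : ∀ᶠ t in atTop, c2 * t ≤ ‖(γ t).1‖ := by
    have hkey : ∀ᶠ t in atTop, E0 / 2 * t ≥ E0 * T1 - f T1 := by
      have h2 : Tendsto (fun t : ℝ => E0 / 2 * t) atTop atTop :=
        Tendsto.const_mul_atTop (by linarith) tendsto_id
      exact h2.eventually_ge_atTop _
    filter_upwards [hkey, eventually_ge_atTop T1] with t h1 h2
    have h3 := hgrow t h2
    have h4 := hfub t h2
    have h5 : n * M * (c2 * t) = E0 / 2 * t := by
      rw [hc2def]; field_simp
    have h6 : n * M * (c2 * t) ≤ n * M * ‖(γ t).1‖ := by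
      rw [h5]; linarith
    exact le_of_mul_le_mul_left h6 hnM
  -- final bounds
  obtain ⟨T3', hT3'⟩ := eventually_atTop.mp (hygrow.and hsmall)
  set T3 := max T3' 1 with hT3def
  have hT3pos : (0:ℝ) < T3 := lt_of_lt_of_le one_pos (le_max_right _ _)
  have hT3fact : ∀ t, T3 ≤ t → (0 < t ∧ c2 * t ≤ ‖(γ t).1‖ ∧ ‖(γ t).2‖ ≤ M) := by
    intro t ht
    have h1 := hT3' t (le_trans (le_max_left _ _) ht)
    exact ⟨lt_of_lt_of_le hT3pos ht, h1.1, hηM t h1.2⟩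
  constructor
  · -- ξ₊ exists
    set K1 := 1/2 * (n:ℝ)^2 * C 1 * M^2 * c2 ^ (-(μ+1)) with hK1def
    apply tendsto_of_norm_deriv_le (fun t => (γ t).2) (fun t => (V t).2) K1 (μ+1) T3 hT3pos
      (by linarith) hηvec hVcont.snd
    intro t ht
    obtain ⟨htpos, hyt, hηt⟩ := hT3fact t ht
    have hangle : ang (γ t).1 ^ (-(μ+1)) ≤ (c2 * t) ^ (-(μ+1)) :=
      ang_rpow_le _ (by linarith) (by positivity) hyt
    have h1 : ‖(V t).2‖ ≤ 1/2 * (n:ℝ)^2 * C 1 * ang (γ t).1 ^ (-(μ+1)) * ‖(γ t).2‖^2 := by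
      have := hamVF_snd_bound a C ha_smooth ha hne (γ t)
      rwa [show -μ-1 = -(μ+1) by ring] at this
    have h2 : ‖(γ t).2‖^2 ≤ M^2 := pow_le_pow_left₀ (norm_nonneg _) hηt 2
    have hpre : (0:ℝ) ≤ 1/2 * (n:ℝ)^2 * C 1 := mul_nonneg (by positivity) hC1
    calc ‖(V t).2‖ ≤ 1/2 * (n:ℝ)^2 * C 1 * ang (γ t).1 ^ (-(μ+1)) * ‖(γ t).2‖^2 := h1
      _ ≤ 1/2 * (n:ℝ)^2 * C 1 * ((c2 * t) ^ (-(μ+1))) * M^2 := by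
          apply mul_le_mul (mul_le_mul_of_nonneg_left hangle hpre) h2 (sq_nonneg _)
          exact mul_nonneg hpre (Real.rpow_nonneg (by positivity) _)
      _ = K1 * t ^ (-(μ+1)) := by
          rw [Real.mul_rpow (le_of_lt hc2) (le_of_lt htpos), hK1def]; ring
  · -- z₊ exists
    set K1 := 1/2 * (n:ℝ)^2 * C 1 * M^2 * c2 ^ (-(μ+1)) with hK1def
    set K2 := (n:ℝ) * C 0 * M * c2 ^ (-μ) + K1 with hK2def
    have hg' : ∀ t, HasDerivAt (fun s => (γ s).1 - s • (γ s).2)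
        ((V t).1 - (t • (V t).2 + (1:ℝ) • (γ t).2)) t := by
      intro t
      exact (hyvec t).sub ((hasDerivAt_id t).smul (hηvec t))
    apply tendsto_of_norm_deriv_le _ (fun t => (V t).1 - (t • (V t).2 + (1:ℝ) • (γ t).2))
      K2 μ T3 hT3pos hμ hg'
    · exact hVcont.fst.sub ((continuous_id.smul hVcont.snd).add
        (by fun_prop : Continuous fun t => (1:ℝ) • (γ t).2))
    intro t ht
    obtain ⟨htpos, hyt, hηt⟩ := hT3fact t ht
    have hangμ : ang (γ t).1 ^ (-μ) ≤ (c2 * t) ^ (-μ) :=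
      ang_rpow_le _ (by linarith) (by positivity) hyt
    have hangμ1 : ang (γ t).1 ^ (-(μ+1)) ≤ (c2 * t) ^ (-(μ+1)) :=
      ang_rpow_le _ (by linarith) (by positivity) hyt
    have hre : (V t).1 - (t • (V t).2 + (1:ℝ) • (γ t).2)
        = ((fun j => (V t).1 j - (γ t).2 j : Fin n → ℝ)) - t • (V t).2 := by
      funext j
      simp only [Pi.sub_apply, Pi.add_apply, Pi.smul_apply, smul_eq_mul, one_mul]
      ring
    rw [hre]
    refine le_trans (norm_sub_le _ _) ?_
    have hb1 : ‖(fun j => (V t).1 j - (γ t).2 j : Fin n → ℝ)‖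
        ≤ (n:ℝ) * C 0 * M * c2 ^ (-μ) * t ^ (-μ) := by
      refine le_trans (hamVF_fst_sub_bound a C ha_smooth ha hne (γ t)) ?_
      have hpre : (0:ℝ) ≤ (n:ℝ) * C 0 := mul_nonneg (le_of_lt hn_pos) hC0
      calc (n:ℝ) * C 0 * ang (γ t).1 ^ (-μ) * ‖(γ t).2‖
          ≤ (n:ℝ) * C 0 * ((c2 * t) ^ (-μ)) * M := by
            apply mul_le_mul (mul_le_mul_of_nonneg_left hangμ hpre) hηt (norm_nonneg _)
            exact mul_nonneg hpre (Real.rpow_nonneg (by positivity) _)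
        _ = (n:ℝ) * C 0 * M * c2 ^ (-μ) * t ^ (-μ) := by
            rw [Real.mul_rpow (le_of_lt hc2) (le_of_lt htpos)]; ring
    have hb2 : ‖t • (V t).2‖ ≤ K1 * t ^ (-μ) := by
      rw [norm_smul, Real.norm_eq_abs, abs_of_pos htpos]
      have h1 : ‖(V t).2‖ ≤ 1/2 * (n:ℝ)^2 * C 1 * ang (γ t).1 ^ (-(μ+1)) * ‖(γ t).2‖^2 := by
        have := hamVF_snd_bound a C ha_smooth ha hne (γ t)
        rwa [show -μ-1 = -(μ+1) by ring] at this
      have h2 : ‖(γ t).2‖^2 ≤ M^2 := pow_le_pow_left₀ (norm_nonneg _) hηt 2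
      have hpre : (0:ℝ) ≤ 1/2 * (n:ℝ)^2 * C 1 := mul_nonneg (by positivity) hC1
      have h3 : ‖(V t).2‖ ≤ K1 * t ^ (-(μ+1)) := by
        calc ‖(V t).2‖ ≤ 1/2 * (n:ℝ)^2 * C 1 * ang (γ t).1 ^ (-(μ+1)) * ‖(γ t).2‖^2 := h1
          _ ≤ 1/2 * (n:ℝ)^2 * C 1 * ((c2 * t) ^ (-(μ+1))) * M^2 := by
              apply mul_le_mul (mul_le_mul_of_nonneg_left hangμ1 hpre) h2 (sq_nonneg _)
              exact mul_nonneg hpre (Real.rpow_nonneg (by positivity) _)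
          _ = K1 * t ^ (-(μ+1)) := by
              rw [Real.mul_rpow (le_of_lt hc2) (le_of_lt htpos), hK1def]; ring
      calc t * ‖(V t).2‖ ≤ t * (K1 * t ^ (-(μ+1))) :=
            mul_le_mul_of_nonneg_left h3 (le_of_lt htpos)
        _ = K1 * (t ^ (-(μ+1)) * t) := by ring
        _ = K1 * t ^ (-μ) := by
            rw [← Real.rpow_add_one (ne_of_gt htpos)]
            norm_num
    calc ‖(fun j => (V t).1 j - (γ t).2 j : Fin n → ℝ)‖ + ‖t • (V t).2‖
        ≤ (n:ℝ) * C 0 * M * c2 ^ (-μ) * t ^ (-μ) + K1 * t ^ (-μ) := add_le_add hb1 hb2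
      _ = K2 * t ^ (-μ) := by rw [hK2def]; ring
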